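/- Let d ≥ 1 and let x = m/n and x' = m'/n' be two points of S^d with m, m' ∈ ℤ^{d+1}, |m|² = n², |m'|² = n'², and n, n' positive integers. Then |x − x'|² = 2(nn' − ⟨m, m'⟩)/(nn'), and if x ≠ x' then |x − x'|² ≥ 2/(nn'). -/

import Mathlib

/-!
Since `|x|² = |x'|² = 1`, the identity `|x - x'|² = 2 - 2⟨x, x'⟩` together with
`⟨x, x'⟩ = ⟨m, m'⟩ / (nn')` gives the formula. For `x ≠ x'` the left side is positive, so the
integer `nn' - ⟨m, m'⟩` is positive, hence at least `1`.
-/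

open Finset

lemma real_inner_eq_sum_div_of_forall_eq_div {ι : Type*} [Fintype ι]
    {x y : EuclideanSpace ℝ ι} {a b : ι → ℝ} {r s : ℝ}
    (hx : ∀ i, x i = a i / r) (hy : ∀ i, y i = b i / s) :
    inner ℝ x y = (∑ i, a i * b i) / (r * s) := by
  simp only [PiLp.inner_apply, Real.inner_apply, hx, hy, div_mul_div_comm, sum_div]

lemma norm_eq_one_of_forall_eq_div {ι : Type*} [Fintype ι]
    {x : EuclideanSpace ℝ ι} {a : ι → ℝ} {r : ℝ} (hr : r ≠ 0)
    (hx : ∀ i, x i = a i / r) (ha : ∑ i, a i ^ 2 = r ^ 2) : ‖x‖ = 1 := by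
  rw [← pow_eq_one_iff_of_nonneg (norm_nonneg x) two_ne_zero, ← real_inner_self_eq_norm_sq,
    real_inner_eq_sum_div_of_forall_eq_div hx hx]
  simp only [← sq, ha]
  exact div_self (pow_ne_zero 2 hr)

lemma norm_sub_sq_of_norm_eq_one {F : Type*} [NormedAddCommGroup F] [InnerProductSpace ℝ F]
    {x y : F} (hx : ‖x‖ = 1) (hy : ‖y‖ = 1) : ‖x - y‖ ^ 2 = 2 * (1 - inner ℝ x y) := by
  rw [norm_sub_sq_real, hx, hy]
  ring

lemma two_div_le_two_mul_div_of_pos {k : ℤ} {q : ℝ} (hq : 0 < q) (h : 0 < 2 * (k : ℝ) / q) :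
    2 / q ≤ 2 * (k : ℝ) / q := by
  have hk_pos : (0 : ℝ) < k :=
    pos_of_mul_pos_right ((div_pos_iff_of_pos_right hq).1 h) zero_le_two
  have hk : (1 : ℝ) ≤ k := by exact_mod_cast Int.cast_pos.1 hk_pos
  gcongr
  linarith

theorem rational_points_repulsion_general
    (d : ℕ) (n n' : ℕ) (hn : 0 < n) (hn' : 0 < n')
    (m m' : Fin (d + 1) → ℤ)
    (hm : (∑ i, m i ^ 2) = (n : ℤ) ^ 2) (hm' : (∑ i, m' i ^ 2) = (n' : ℤ) ^ 2)
    (x x' : EuclideanSpace ℝ (Fin (d + 1)))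
    (hx : ∀ i, x i = (m i : ℝ) / (n : ℝ)) (hx' : ∀ i, x' i = (m' i : ℝ) / (n' : ℝ)) :
    ‖x - x'‖ ^ 2 = 2 * ((n : ℝ) * (n' : ℝ) - ((∑ i, m i * m' i : ℤ) : ℝ)) /
      ((n : ℝ) * (n' : ℝ)) ∧
    (x ≠ x' → 2 / ((n : ℝ) * (n' : ℝ)) ≤ ‖x - x'‖ ^ 2) := by
  have hnn' : (0 : ℝ) < n * n' := by positivity
  have hunit : ‖x‖ = 1 := norm_eq_one_of_forall_eq_div (by positivity) hx (by exact_mod_cast hm)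
  have hunit' : ‖x'‖ = 1 :=
    norm_eq_one_of_forall_eq_div (by positivity) hx' (by exact_mod_cast hm')
  have hdist : ‖x - x'‖ ^ 2 = 2 * ((n : ℝ) * (n' : ℝ) - ((∑ i, m i * m' i : ℤ) : ℝ)) /
      ((n : ℝ) * (n' : ℝ)) := by
    rw [norm_sub_sq_of_norm_eq_one hunit hunit', real_inner_eq_sum_div_of_forall_eq_div hx hx']
    field_simp
    push_cast
    ring
  refine ⟨hdist, fun hne => ?_⟩
  have hpos : 0 < ‖x - x'‖ ^ 2 := by
    have := norm_pos_iff.2 (sub_ne_zero.2 hne)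
    positivity
  rw [hdist] at hpos ⊢
  exact_mod_cast two_div_le_two_mul_div_of_pos (k := n * n' - ∑ i, m i * m' i) hnn'
    (by exact_mod_cast hpos)

/-- Repulsion between rational points on the sphere: if `x = m/n` and `x' = m'/n'` lie
on `S^d`, then `|x - x'|² = 2(nn' - ⟨m,m'⟩)/(nn')`, and `|x - x'|² ≥ 2/(nn')` if `x ≠ x'`. -/
theorem rational_points_repulsion
    (d : ℕ) (hd : 1 ≤ d) (n n' : ℕ) (hn : 0 < n) (hn' : 0 < n')
    (m m' : Fin (d + 1) → ℤ)
    (hm : (∑ i, m i ^ 2) = (n : ℤ) ^ 2) (hm' : (∑ i, m' i ^ 2) = (n' : ℤ) ^ 2)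
    (x x' : EuclideanSpace ℝ (Fin (d + 1)))
    (hx : ∀ i, x i = (m i : ℝ) / (n : ℝ)) (hx' : ∀ i, x' i = (m' i : ℝ) / (n' : ℝ)) :
    ‖x - x'‖ ^ 2 = 2 * ((n : ℝ) * (n' : ℝ) - ((∑ i, m i * m' i : ℤ) : ℝ)) /
      ((n : ℝ) * (n' : ℝ)) ∧
    (x ≠ x' → 2 / ((n : ℝ) * (n' : ℝ)) ≤ ‖x - x'‖ ^ 2) :=
  rational_points_repulsion_general d n n' hn hn' m m' hm hm' x x' hx hx'
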